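/- Define f : ℝ → ℝ by f(x) = x² for |x| ≤ 6 and f(x) = x² + 1.5|x|(cos(|x| − 6) − 1) for |x| > 6. Then f is differentiable on ℝ, x⋆ = 0 is its global minimizer, and f satisfies the Regularity Condition RC(0.5, 0.5) globally: f'(x)·x ≥ (1/4)(f'(x))² + (1/4)x² for all x ∈ ℝ. -/

import Mathlib

/-!
Write `f x = x² + 3/2 (T x + T (-x))` with `T t = t (cos (t - 6) - 1)` for `t > 6` and `T t = 0`
otherwise; `T` is differentiable because its tail vanishes to first order at `6`. With
`f' x = 2 x + 3/2 q`, the inequality `f' x · x ≥ (f' x)² / 4 + x² / 4` is equivalent to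
`q² ≤ 4/3 x²`, that is `(1 - cos θ + t sin θ)² ≤ 4/3 t²` for `t = 6 + θ`. For `θ ≤ 1` this follows
from `1 - cos θ ≤ θ² / 2` and `0 ≤ sin θ ≤ θ`, and for `t ≥ 7` from Cauchy–Schwarz.
-/

open Real

section Gluing

variable {F : Type*} [NormedAddCommGroup F] [NormedSpace ℝ F]

theorem hasDerivAt_ite_le {g h g' h' : ℝ → F} {a : ℝ} (hg : ∀ x, HasDerivAt g (g' x) x)
    (hh : ∀ x, HasDerivAt h (h' x) x) (hgh : g a = h a) (hgh' : g' a = h' a) (x : ℝ) :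
    HasDerivAt (fun t => if t ≤ a then g t else h t) (if x ≤ a then g' x else h' x) x := by
  rcases lt_trichotomy x a with hxa | rfl | hax
  · rw [if_pos hxa.le]
    refine (hg x).congr_of_eventuallyEq ?_
    filter_upwards [Iio_mem_nhds hxa] with t ht
    exact if_pos (le_of_lt ht)
  · rw [if_pos le_rfl]
    have hleft : HasDerivWithinAt (fun t => if t ≤ x then g t else h t) (g' x) (Set.Iic x) x :=
      (hg x).hasDerivWithinAt.congr (fun t ht => if_pos ht) (if_pos le_rfl)
    have hright : HasDerivWithinAt (fun t => if t ≤ x then g t else h t) (g' x) (Set.Ici x) x := by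
      refine (hgh' ▸ (hh x).hasDerivWithinAt).congr (fun t ht => ?_) (by simp [hgh])
      rcases (Set.mem_Ici.mp ht).eq_or_lt with rfl | ht
      · simp [hgh]
      · exact if_neg (not_le.mpr ht)
    simpa using hleft.union hright
  · rw [if_neg (not_le.mpr hax)]
    refine (hh x).congr_of_eventuallyEq ?_
    filter_upwards [Ioi_mem_nhds hax] with t ht
    exact if_neg (not_le.mpr ht)

end Gluing

theorem sq_one_sub_cos_add_mul_sin_le_of_le_one {θ t : ℝ} (hθ₀ : 0 ≤ θ) (hθ₁ : θ ≤ 1)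
    (ht : 4 ≤ t) : (1 - cos θ + t * sin θ) ^ 2 ≤ 4 / 3 * t ^ 2 := by
  have hcos : 1 - cos θ ≤ 1 / 2 := by nlinarith [one_sub_sq_div_two_le_cos (x := θ)]
  have hsin : sin θ ≤ 1 := (sin_le hθ₀).trans hθ₁
  have hsin₀ : 0 ≤ sin θ := sin_nonneg_of_nonneg_of_le_pi hθ₀ (by linarith [pi_gt_three])
  have h₀ : 0 ≤ 1 - cos θ + t * sin θ := by nlinarith [cos_le_one θ]
  have h₁ : 1 - cos θ + t * sin θ ≤ 1 / 2 + t := by nlinarith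
  nlinarith

/-- By Cauchy–Schwarz `|t sin θ - cos θ| ≤ √(t² + 1)`, and `1 + √(t² + 1) ≤ 2 t / √3` once `t ≥ 7`. -/
theorem sq_one_sub_cos_add_mul_sin_le_of_seven_le {θ t : ℝ} (ht : 7 ≤ t) :
    (1 - cos θ + t * sin θ) ^ 2 ≤ 4 / 3 * t ^ 2 := by
  set w := t * sin θ - cos θ
  have hw : w ^ 2 ≤ t ^ 2 + 1 := by
    nlinarith [sin_sq_add_cos_sq θ, sq_nonneg (t * cos θ + sin θ)]
  have hc : 0 ≤ t ^ 2 / 6 - 1 := by nlinarith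
  have hw' : w ≤ t ^ 2 / 6 - 1 := by
    refine abs_le_of_sq_le_sq' ?_ hc |>.2
    have h48 : 0 ≤ t ^ 2 - 48 := by nlinarith
    nlinarith [mul_nonneg (sq_nonneg t) h48]
  nlinarith

theorem sq_one_sub_cos_add_mul_sin_le {a t : ℝ} (ha : 6 ≤ a) (hat : a ≤ t) :
    (1 - cos (t - a) + t * sin (t - a)) ^ 2 ≤ 4 / 3 * t ^ 2 := by
  rcases le_or_gt (t - a) 1 with hθ | hθ
  · exact sq_one_sub_cos_add_mul_sin_le_of_le_one (by linarith) hθ (by linarith)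
  · exact sq_one_sub_cos_add_mul_sin_le_of_seven_le (by linarith)

noncomputable def cosTail (a t : ℝ) : ℝ :=
  if t ≤ a then 0 else t * (cos (t - a) - 1)

noncomputable def cosTailDeriv (a t : ℝ) : ℝ :=
  if t ≤ a then 0 else cos (t - a) - 1 - t * sin (t - a)

theorem hasDerivAt_cosTail (a x : ℝ) : HasDerivAt (cosTail a) (cosTailDeriv a x) x := by
  have htail (t : ℝ) : HasDerivAt (fun t => t * (cos (t - a) - 1))
      (cos (t - a) - 1 - t * sin (t - a)) t :=
    ((hasDerivAt_id' t).mul (((hasDerivAt_id' t).sub_const a).cos.sub_const 1)).congr_deriv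
      (by ring)
  exact hasDerivAt_ite_le (fun t => hasDerivAt_const t 0) htail (by simp) (by simp) x

theorem sq_cosTailDeriv_le {a : ℝ} (ha : 6 ≤ a) (t : ℝ) :
    cosTailDeriv a t ^ 2 ≤ 4 / 3 * t ^ 2 := by
  unfold cosTailDeriv
  split_ifs with ht
  · nlinarith [sq_nonneg t]
  · calc (cos (t - a) - 1 - t * sin (t - a)) ^ 2
        = (1 - cos (t - a) + t * sin (t - a)) ^ 2 := by ring
      _ ≤ 4 / 3 * t ^ 2 := sq_one_sub_cos_add_mul_sin_le ha (not_le.mp ht).le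

theorem sq_cosTailDeriv_sub_cosTailDeriv_neg_le {a : ℝ} (ha : 6 ≤ a) (x : ℝ) :
    (cosTailDeriv a x - cosTailDeriv a (-x)) ^ 2 ≤ 4 / 3 * x ^ 2 := by
  by_cases hx : x ≤ a
  · simpa [cosTailDeriv, hx] using sq_cosTailDeriv_le ha (-x)
  · have hx' : -x ≤ a := by linarith
    simpa [cosTailDeriv, hx'] using sq_cosTailDeriv_le ha x

theorem cosTail_add_cosTail_neg {a : ℝ} (ha : 0 ≤ a) (x : ℝ) :
    cosTail a x + cosTail a (-x) = if |x| ≤ a then 0 else |x| * (cos (|x| - a) - 1) := by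
  unfold cosTail
  rcases le_total 0 x with hx | hx
  · simp only [abs_of_nonneg hx]
    split_ifs <;> first | ring1 | linarith
  · simp only [abs_of_nonpos hx]
    split_ifs <;> first | ring1 | linarith

theorem example_function_satisfies_RC :
    let f : ℝ → ℝ := fun x =>
      if |x| ≤ 6 then x ^ 2 else x ^ 2 + 1.5 * |x| * (Real.cos (|x| - 6) - 1)
    Differentiable ℝ f ∧
    (∀ x : ℝ, f 0 ≤ f x) ∧
    (∀ x : ℝ, deriv f x * x ≥ 1 / 4 * deriv f x ^ 2 + 1 / 4 * x ^ 2) := by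
  intro f
  have hf : f = fun x => x ^ 2 + 1.5 * (cosTail 6 x + cosTail 6 (-x)) := by
    funext x
    simp only [f, cosTail_add_cosTail_neg (by norm_num : (0 : ℝ) ≤ 6)]
    split_ifs <;> ring
  have hderiv (x : ℝ) :
      HasDerivAt f (2 * x + 1.5 * (cosTailDeriv 6 x - cosTailDeriv 6 (-x))) x := by
    rw [hf]
    refine ((hasDerivAt_pow 2 x).add (((hasDerivAt_cosTail 6 x).add
      ((hasDerivAt_cosTail 6 (-x)).comp x (hasDerivAt_neg x))).const_mul 1.5)).congr_deriv ?_
    push_cast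
    ring
  refine ⟨fun x => (hderiv x).differentiableAt, fun x => ?_, fun x => ?_⟩
  · have hf0 : f 0 = 0 := by simp [f]
    rw [hf0]
    simp only [f]
    split_ifs
    · positivity
    · nlinarith [neg_one_le_cos (|x| - 6), sq_abs x, abs_nonneg x]
  · rw [(hderiv x).deriv]
    nlinarith [sq_cosTailDeriv_sub_cosTailDeriv_neg_le (by norm_num : (6 : ℝ) ≤ 6) x]
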